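/- Fix constants γ, β, μ > 0 and for k ∈ ℝ³ let λ_±(k) = −μ|k|²/2 ± (1/2)√(μ²|k|⁴ − 4(γ²|k|² + β²)) (complex square root) be the roots of z² + μ|k|²z + (γ²|k|² + β²) = 0. Then there exist constants ε > 0 and C > 0 such that for every k with 0 < |k| ≤ ε (in which case μ²|k|⁴ − 4(γ²|k|² + β²) < 0, so λ₊ ≠ λ₋) and every t ≥ 0: |(λ₊(k) e^{λ₋(k)t} − λ₋(k) e^{λ₊(k)t})/(λ₊(k) − λ₋(k))| ≤ C e^{−μ|k|²t/2}. -/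

import Mathlib

/-!
For `0 < |k| ≤ √(β/μ)` we have `a := μ|k|² ≤ β`, so the discriminant is negative and
`λ± = (-a ± i d)/2` with `d = √(4(γ²|k|² + β²) - a²) ≥ a`. Both exponentials have modulus
`e^{-at/2}`, `|λ±| ≤ (a + d)/2 ≤ d` and `|λ₊ - λ₋| = d`, so the quotient is at most `2 e^{-at/2}`.
-/

/-- The principal complex square root of a real number. -/
noncomputable def sqrtC (x : ℝ) : ℂ := (x : ℂ) ^ (1/2 : ℂ)

open Complex

lemma sqrtC_of_neg {x : ℝ} (hx : x < 0) : sqrtC x = Real.sqrt (-x) * I := by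
  have hx0 : (x : ℂ) ≠ 0 := by exact_mod_cast hx.ne
  have hlog : log (x : ℂ) = (Real.log (-x) : ℂ) + Real.pi * I := by
    rw [log, arg_ofReal_of_neg hx]
    simp [abs_of_neg hx]
  have hexp : exp ((Real.log (-x) / 2 : ℝ) : ℂ) = (Real.sqrt (-x) : ℂ) := by
    rw [← ofReal_exp, Real.sqrt_eq_rpow, Real.rpow_def_of_pos (by linarith), mul_one_div]
  rw [sqrtC, cpow_def_of_ne_zero hx0, hlog,
    show ((Real.log (-x) : ℂ) + Real.pi * I) * (1 / 2)
      = ((Real.log (-x) / 2 : ℝ) : ℂ) + ((Real.pi / 2 : ℝ) : ℂ) * I by push_cast; ring,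
    exp_add, exp_mul_I, hexp]
  norm_cast
  simp

lemma norm_mul_exp_sub_mul_exp_le {lp lm : ℂ} {r : ℝ} (hp : lp.re = r) (hm : lm.re = r)
    (t : ℝ) :
    ‖lp * exp (lm * t) - lm * exp (lp * t)‖ ≤ (‖lp‖ + ‖lm‖) * Real.exp (r * t) := by
  calc ‖lp * exp (lm * t) - lm * exp (lp * t)‖
      ≤ ‖lp * exp (lm * t)‖ + ‖lm * exp (lp * t)‖ := norm_sub_le _ _
    _ = (‖lp‖ + ‖lm‖) * Real.exp (r * t) := by
      rw [norm_mul, norm_mul, norm_exp, norm_exp, re_mul_ofReal, re_mul_ofReal, hp, hm]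
      ring

lemma norm_conj_roots_exp_combination_le {a d : ℝ} (hd : 0 < d) (had : |a| ≤ d) {lp lm : ℂ}
    (hlp : lp = (-(a : ℂ) + d * I) / 2) (hlm : lm = (-(a : ℂ) - d * I) / 2) :
    lp ≠ lm ∧ ∀ t : ℝ,
      ‖(lp * exp (lm * t) - lm * exp (lp * t)) / (lp - lm)‖ ≤ 2 * Real.exp (-(a * t / 2)) := by
  have hsub : lp - lm = d * I := by rw [hlp, hlm]; ring
  have hnorm_root : ∀ z : ℂ, z.re = -(a / 2) → |z.im| = d / 2 → ‖z‖ ≤ d := fun z hre him => by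
    calc ‖z‖ ≤ |z.re| + |z.im| := norm_le_abs_re_add_abs_im z
      _ ≤ d := by rw [hre, him, abs_neg, abs_div, abs_two]; linarith
  refine ⟨sub_ne_zero.mp (hsub ▸ mul_ne_zero (ofReal_ne_zero.mpr hd.ne') I_ne_zero), fun t => ?_⟩
  have hre_p : lp.re = -(a / 2) := by simp [hlp, neg_div]
  have hre_m : lm.re = -(a / 2) := by simp [hlm, neg_div]
  have hp : ‖lp‖ ≤ d := hnorm_root lp hre_p (by simp [hlp, abs_div, abs_of_pos hd])
  have hm : ‖lm‖ ≤ d := hnorm_root lm hre_m (by simp [hlm, neg_div, abs_div, abs_of_pos hd])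
  rw [norm_div, hsub, norm_mul, norm_I, norm_real, Real.norm_of_nonneg hd.le, mul_one,
    div_le_iff₀ hd]
  calc _ ≤ (‖lp‖ + ‖lm‖) * Real.exp (-(a / 2) * t) := norm_mul_exp_sub_mul_exp_le hre_p hre_m t
    _ ≤ (d + d) * Real.exp (-(a / 2) * t) := by gcongr
    _ = 2 * Real.exp (-(a * t / 2)) * d := by ring_nf

theorem stmt18_general (γ β μ : ℝ) (hβ : 0 < β) (hμ : 0 < μ) :
    ∃ ε : ℝ, 0 < ε ∧ ∃ C : ℝ, 0 < C ∧
      ∀ k : EuclideanSpace ℝ (Fin 3), 0 < ‖k‖ → ‖k‖ ≤ ε →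
        μ^2*‖k‖^4 - 4*(γ^2*‖k‖^2 + β^2) < 0 ∧
        ∀ lp lm : ℂ,
          lp = (-(((μ*‖k‖^2 : ℝ):ℂ)) + sqrtC (μ^2*‖k‖^4 - 4*(γ^2*‖k‖^2 + β^2)))/2 →
          lm = (-(((μ*‖k‖^2 : ℝ):ℂ)) - sqrtC (μ^2*‖k‖^4 - 4*(γ^2*‖k‖^2 + β^2)))/2 →
          lp ≠ lm ∧
          ∀ t : ℝ, 0 ≤ t →
            ‖((lp * Complex.exp (lm*(t:ℂ)) - lm * Complex.exp (lp*(t:ℂ)))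
                / (lp - lm))‖
              ≤ C * Real.exp (-(μ*‖k‖^2*t/2)) := by
  refine ⟨Real.sqrt (β / μ), by positivity, 2, two_pos, fun k hk hkε => ?_⟩
  have ha0 : 0 ≤ μ * ‖k‖ ^ 2 := by positivity
  have haβ : μ * ‖k‖ ^ 2 ≤ β := by
    have := pow_le_pow_left₀ hk.le hkε 2
    rw [Real.sq_sqrt (by positivity)] at this
    rwa [le_div_iff₀ hμ, mul_comm] at this
  have hD : μ^2*‖k‖^4 - 4*(γ^2*‖k‖^2 + β^2) < 0 := by
    nlinarith [sq_nonneg (γ * ‖k‖)]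
  refine ⟨hD, fun lp lm hlp hlm => ?_⟩
  rw [sqrtC_of_neg hD] at hlp hlm
  have had : |μ * ‖k‖ ^ 2| ≤ Real.sqrt (-(μ^2*‖k‖^4 - 4*(γ^2*‖k‖^2 + β^2))) := by
    rw [abs_of_nonneg ha0]
    exact Real.le_sqrt_of_sq_le (by nlinarith [sq_nonneg (γ * ‖k‖)])
  obtain ⟨hne, hbound⟩ :=
    norm_conj_roots_exp_combination_le (Real.sqrt_pos.mpr (by linarith)) had hlp hlm
  exact ⟨hne, fun t _ => hbound t⟩

/-- there are `ε, C > 0` such that for all `0 < |k| ≤ ε` (in which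
case the discriminant `μ²|k|⁴ − 4(γ²|k|² + β²)` is negative, so `λ₊ ≠ λ₋`) and
all `t ≥ 0`,
`|(λ₊e^{λ₋t} − λ₋e^{λ₊t})/(λ₊ − λ₋)| ≤ C e^{−μ|k|²t/2}`. -/
theorem stmt18 (γ β μ : ℝ) (hγ : 0 < γ) (hβ : 0 < β) (hμ : 0 < μ) :
    ∃ ε : ℝ, 0 < ε ∧ ∃ C : ℝ, 0 < C ∧
      ∀ k : EuclideanSpace ℝ (Fin 3), 0 < ‖k‖ → ‖k‖ ≤ ε →
        μ^2*‖k‖^4 - 4*(γ^2*‖k‖^2 + β^2) < 0 ∧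
        ∀ lp lm : ℂ,
          lp = (-(((μ*‖k‖^2 : ℝ):ℂ)) + sqrtC (μ^2*‖k‖^4 - 4*(γ^2*‖k‖^2 + β^2)))/2 →
          lm = (-(((μ*‖k‖^2 : ℝ):ℂ)) - sqrtC (μ^2*‖k‖^4 - 4*(γ^2*‖k‖^2 + β^2)))/2 →
          lp ≠ lm ∧
          ∀ t : ℝ, 0 ≤ t →
            ‖((lp * Complex.exp (lm*(t:ℂ)) - lm * Complex.exp (lp*(t:ℂ)))
                / (lp - lm))‖
              ≤ C * Real.exp (-(μ*‖k‖^2*t/2)) :=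
  stmt18_general γ β μ hβ hμ
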